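/- Let T be a tree of order m ≥ 2 and n ≥ 2. Then mr_+^R(T ∘ K_n) = mr_+^C(T ∘ K_n) = 2m − 1, where T ∘ K_n is the corona product of T with the complete graph K_n. -/

import Mathlib

open scoped ComplexOrder

/-- The minimum positive semidefinite rank of a simple graph `G` over the field `𝕜`
(`𝕜 = ℝ` gives `mr₊^ℝ`, `𝕜 = ℂ` gives `mr₊^ℂ`): the minimum rank over all positive
semidefinite Hermitian matrices whose off-diagonal zero/nonzero pattern matches `G`. -/
noncomputable def mrPlus (𝕜 : Type) [RCLike 𝕜] {V : Type} [Fintype V] [DecidableEq V]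
    (G : SimpleGraph V) : ℕ :=
  sInf {r : ℕ | ∃ A : Matrix V V 𝕜, A.PosSemidef ∧
    (∀ i j : V, i ≠ j → (A i j ≠ 0 ↔ G.Adj i j)) ∧ A.rank = r}

/-- `G` is a frame graph in the `d`-dimensional inner product space over `𝕜`:
there is a spanning family (frame) `f` indexed by the vertices such that distinct
vertices are adjacent iff the corresponding vectors are non-orthogonal. -/
def IsFrameGraphIn (𝕜 : Type) [RCLike 𝕜] {V : Type} (G : SimpleGraph V) (d : ℕ) : Prop :=
  ∃ f : V → EuclideanSpace 𝕜 (Fin d),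
    Submodule.span 𝕜 (Set.range f) = ⊤ ∧
    ∀ i j : V, i ≠ j → ((inner 𝕜 (f i) (f j) : 𝕜) ≠ 0 ↔ G.Adj i j)

/-- The strong product of two simple graphs. -/
def strongProd {α β : Type} (G : SimpleGraph α) (H : SimpleGraph β) :
    SimpleGraph (α × β) where
  Adj x y := (x.1 = y.1 ∧ H.Adj x.2 y.2) ∨ (x.2 = y.2 ∧ G.Adj x.1 y.1) ∨
    (G.Adj x.1 y.1 ∧ H.Adj x.2 y.2)
  symm := by
    constructor
    rintro ⟨a, b⟩ ⟨c, d⟩ (⟨h1, h2⟩ | ⟨h1, h2⟩ | ⟨h1, h2⟩)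
    · exact Or.inl ⟨h1.symm, h2.symm⟩
    · exact Or.inr (Or.inl ⟨h1.symm, h2.symm⟩)
    · exact Or.inr (Or.inr ⟨h1.symm, h2.symm⟩)
  loopless := by
    constructor
    rintro ⟨a, b⟩ (⟨_, h⟩ | ⟨_, h⟩ | ⟨h, _⟩)
    · exact H.loopless.irrefl b h
    · exact G.loopless.irrefl a h
    · exact G.loopless.irrefl a h

/-- The join `G ∨ H` of two graphs with disjoint vertex sets. -/
def joinGraph {α β : Type} (G : SimpleGraph α) (H : SimpleGraph β) :
    SimpleGraph (α ⊕ β) where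
  Adj x y := match x, y with
    | Sum.inl a, Sum.inl b => G.Adj a b
    | Sum.inr a, Sum.inr b => H.Adj a b
    | Sum.inl _, Sum.inr _ => True
    | Sum.inr _, Sum.inl _ => True
  symm := by
    constructor
    rintro (a | a) (b | b) h
    · exact h.symm
    · trivial
    · trivial
    · exact h.symm
  loopless := by
    constructor
    rintro (a | a) h
    · exact G.loopless.irrefl a h
    · exact H.loopless.irrefl a h

/-- The vertex-sum `G · H` of `G` and `H`, obtained by identifying the vertex `a` of `G`
with the vertex `b` of `H` (and no other vertices or edges shared). -/
def vertexSum {α β : Type} (G : SimpleGraph α) (H : SimpleGraph β) (a : α) (b : β) :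
    SimpleGraph (α ⊕ {y : β // y ≠ b}) where
  Adj x y := match x, y with
    | Sum.inl u, Sum.inl u' => G.Adj u u'
    | Sum.inr v, Sum.inr v' => H.Adj v.1 v'.1
    | Sum.inl u, Sum.inr v => u = a ∧ H.Adj b v.1
    | Sum.inr v, Sum.inl u => u = a ∧ H.Adj b v.1
  symm := by
    constructor
    rintro (u | v) (u' | v') h
    · exact h.symm
    · exact h
    · exact h
    · exact h.symm
  loopless := by
    constructor
    rintro (u | v) h
    · exact G.loopless.irrefl u h
    · exact H.loopless.irrefl v.1 h

/-- The corona product `G ∘ H`: one copy of `G`, one copy of `H` for each vertex of `G`,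
with every vertex of the `i`-th copy of `H` joined to the `i`-th vertex of `G`. -/
def corona {α β : Type} (G : SimpleGraph α) (H : SimpleGraph β) :
    SimpleGraph (α ⊕ α × β) where
  Adj x y := match x, y with
    | Sum.inl u, Sum.inl u' => G.Adj u u'
    | Sum.inr p, Sum.inr q => p.1 = q.1 ∧ H.Adj p.2 q.2
    | Sum.inl u, Sum.inr p => u = p.1
    | Sum.inr p, Sum.inl u => u = p.1
  symm := by
    constructor
    rintro (u | p) (u' | q) h
    · exact h.symm
    · exact h
    · exact h
    · exact ⟨h.1.symm, h.2.symm⟩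
  loopless := by
    constructor
    rintro (u | p) h
    · exact G.loopless.irrefl u h
    · exact H.loopless.irrefl p.2 h.2

/-- `v : Fin m → V` is an OS-vertex set of `G`: the vertices are distinct, and for each `k`
there is `w` adjacent to `v k`, different from all `v l` with `l ≤ k`, and non-adjacent to
every `v l` (`l < k`) lying in the connected component of `v k` in the subgraph induced by
`{v 0, …, v k}`. -/
def IsOSSet {V : Type} (G : SimpleGraph V) {m : ℕ} (v : Fin m → V) : Prop :=
  Function.Injective v ∧
  ∀ k : Fin m, ∃ w : V,
    G.Adj (v k) w ∧
    (∀ l : Fin m, l ≤ k → w ≠ v l) ∧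
    ∀ l : Fin m, (hl : l < k) →
      (G.induce {x : V | ∃ l' : Fin m, l' ≤ k ∧ x = v l'}).Reachable
        ⟨v l, ⟨l, le_of_lt hl, rfl⟩⟩ ⟨v k, ⟨k, le_refl k, rfl⟩⟩ →
      ¬ G.Adj w (v l)

/-- The OS-number of `G`: the maximum cardinality of an OS-vertex set of `G`. -/
noncomputable def OSNumber {V : Type} (G : SimpleGraph V) : ℕ :=
  sSup {m : ℕ | ∃ v : Fin m → V, IsOSSet G v}

/-!
Writing a positive semidefinite matrix as the Gram matrix of vectors `z v`, its rank is the
dimension of their span and its zero pattern says that `z` is a faithful orthogonal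
representation of the graph. For the lower bound, fix a vertex `(u, b)` in every copy of `K_n`:
the vectors `y u = z (u, b)` are pairwise orthogonal, and removing from `z u` its component along
`y u` leaves an orthogonal representation of `T` orthogonal to every `y`. In an orthogonal
representation of a tree all vectors but one are linearly independent, which gives
`m + (m - 1)` independent vectors. The upper bound is attained by 0/1 vectors indexed by the
vertices and the edges of `T`.
-/

open Module Submodule Set

section InnerProductSpace

variable {𝕜 : Type*} [RCLike 𝕜] {E : Type*} [NormedAddCommGroup E] [InnerProductSpace 𝕜 E]

theorem Matrix.rank_gram {n : Type*} [Fintype n] [FiniteDimensional 𝕜 E] (v : n → E) :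
    (Matrix.gram 𝕜 v).rank = finrank 𝕜 (span 𝕜 (range v)) := by
  let b := stdOrthonormalBasis 𝕜 E
  let e : E ≃ₗ[𝕜] (Fin (finrank 𝕜 E) → 𝕜) :=
    b.repr.toLinearEquiv.trans (WithLp.linearEquiv 2 𝕜 _)
  rw [Matrix.gram_eq_conjTranspose_mul b, Matrix.rank_conjTranspose_mul_self,
    Matrix.rank_eq_finrank_span_cols, ← LinearEquiv.finrank_map_eq e, Submodule.map_span,
    ← Set.range_comp]
  rfl

theorem Matrix.PosSemidef.exists_eq_gram {n : Type*} [Fintype n] [DecidableEq n]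
    {A : Matrix n n 𝕜} (hA : A.PosSemidef) : ∃ v : n → EuclideanSpace 𝕜 n, A = Matrix.gram 𝕜 v := by
  open scoped MatrixOrder in
  obtain ⟨B, rfl⟩ := CStarAlgebra.nonneg_iff_eq_star_mul_self.mp hA.nonneg
  refine ⟨fun j => WithLp.toLp 2 (fun k => B k j), ?_⟩
  ext i j
  simp [Matrix.mul_apply, Matrix.gram_apply, PiLp.inner_apply, mul_comm]

theorem eq_zero_of_add_eq_zero_of_inner_eq_zero {x y : E} (h : x + y = 0)
    (hxy : inner 𝕜 x y = 0) : x = 0 := by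
  rwa [← inner_self_eq_zero (𝕜 := 𝕜), ← neg_eq_zero, ← inner_neg_right,
    neg_eq_of_add_eq_zero_right h]

theorem inner_sub_proj_eq_zero {ι : Type*} {x y : ι → E}
    (hy : Pairwise fun u v => inner 𝕜 (y u) (y v) = 0)
    (hxy : ∀ u v, u ≠ v → inner 𝕜 (x u) (y v) = 0) (u v : ι) :
    inner 𝕜 (y v) (x u - (inner 𝕜 (y u) (x u) / inner 𝕜 (y u) (y u)) • y u) = 0 := by
  rw [inner_sub_right, inner_smul_right]
  obtain rfl | hvu := eq_or_ne v u
  · by_cases hyy : inner 𝕜 (y v) (y v) = 0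
    · simp [inner_self_eq_zero.mp hyy]
    · rw [div_mul_cancel₀ _ hyy, sub_self]
  · rw [inner_eq_zero_symm.mp (hxy u v hvu.symm), hy hvu, mul_zero, sub_zero]

end InnerProductSpace

noncomputable def indicatorVec (𝕜 : Type*) [RCLike 𝕜] {ρ : Type*} (s : Set ρ) :
    EuclideanSpace 𝕜 ρ :=
  WithLp.toLp 2 (s.indicator 1)

theorem inner_indicatorVec_ne_zero_iff {𝕜 : Type*} [RCLike 𝕜] {ρ : Type*} [Fintype ρ]
    (s t : Set ρ) : inner 𝕜 (indicatorVec 𝕜 s) (indicatorVec 𝕜 t) ≠ 0 ↔ (s ∩ t).Nonempty := by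
  classical
  simp [indicatorVec, PiLp.inner_apply, Set.indicator_apply, ← ite_and, Finset.filter_eq_empty_iff,
    Set.Nonempty]

namespace SimpleGraph

section OrthRep

variable {𝕜 : Type*} [RCLike 𝕜] {E : Type*} [NormedAddCommGroup E] [InnerProductSpace 𝕜 E]
  {V : Type*}

variable (𝕜) in
def IsFaithfulOrthRep (G : SimpleGraph V) (z : V → E) : Prop :=
  ∀ u v, u ≠ v → (inner 𝕜 (z u) (z v) ≠ 0 ↔ G.Adj u v)

theorem IsFaithfulOrthRep.inner_eq_zero {G : SimpleGraph V} {z : V → E}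
    (hz : G.IsFaithfulOrthRep 𝕜 z) {u v : V} (huv : u ≠ v) (h : ¬ G.Adj u v) :
    inner 𝕜 (z u) (z v) = 0 :=
  not_not.mp fun h' => h ((hz u v huv).mp h')

theorem IsFaithfulOrthRep.sub_proj {G : SimpleGraph V} {x y : V → E}
    (hx : G.IsFaithfulOrthRep 𝕜 x) (hy : Pairwise fun u v => inner 𝕜 (y u) (y v) = 0)
    (hxy : ∀ u v, u ≠ v → inner 𝕜 (x u) (y v) = 0) :
    G.IsFaithfulOrthRep 𝕜 fun u => x u - (inner 𝕜 (y u) (x u) / inner 𝕜 (y u) (y u)) • y u := by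
  intro u v huv
  convert hx u v huv using 2
  simp [inner_sub_left, inner_sub_right, inner_smul_left, inner_smul_right, hxy u v huv, hy huv,
    inner_eq_zero_symm.mp (hxy v u huv.symm)]

end OrthRep

section MrPlus

variable {𝕜 : Type} [RCLike 𝕜] {E : Type*} [NormedAddCommGroup E] [InnerProductSpace 𝕜 E]
  [FiniteDimensional 𝕜 E] {V : Type} [Fintype V] [DecidableEq V] {G : SimpleGraph V}

theorem mrPlus_le_finrank_span {z : V → E} (hz : G.IsFaithfulOrthRep 𝕜 z) :
    mrPlus 𝕜 G ≤ finrank 𝕜 (span 𝕜 (range z)) :=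
  Nat.sInf_le ⟨_, Matrix.posSemidef_gram 𝕜 z, hz, Matrix.rank_gram z⟩

theorem mrPlus_eq_of_isFaithfulOrthRep {z₀ : V → E} (hz₀ : G.IsFaithfulOrthRep 𝕜 z₀) {d : ℕ}
    (hz₀d : finrank 𝕜 (span 𝕜 (range z₀)) ≤ d)
    (hd : ∀ z : V → EuclideanSpace 𝕜 V, G.IsFaithfulOrthRep 𝕜 z →
      d ≤ finrank 𝕜 (span 𝕜 (range z))) :
    mrPlus 𝕜 G = d := by
  refine le_antisymm ((mrPlus_le_finrank_span hz₀).trans hz₀d) ?_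
  refine le_csInf ⟨_, _, Matrix.posSemidef_gram 𝕜 z₀, hz₀, rfl⟩ ?_
  rintro _ ⟨A, hA, hAG, rfl⟩
  obtain ⟨z, rfl⟩ := hA.exists_eq_gram
  rw [Matrix.rank_gram]
  exact hd z hAG

end MrPlus

section ReachableIn

variable {V : Type*} {G : SimpleGraph V} {s : Set V} {u v w : V}

def ReachableIn (G : SimpleGraph V) (s : Set V) (u v : V) : Prop :=
  ∃ p : G.Walk u v, ∀ x ∈ p.support, x ∈ s

theorem ReachableIn.refl (hu : u ∈ s) : G.ReachableIn s u u :=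
  ⟨.nil, by simpa⟩

theorem ReachableIn.mem_left : G.ReachableIn s u v → u ∈ s
  | ⟨p, hp⟩ => hp u p.start_mem_support

theorem ReachableIn.symm : G.ReachableIn s u v → G.ReachableIn s v u
  | ⟨p, hp⟩ => ⟨p.reverse, by simpa using hp⟩

theorem ReachableIn.cons (h : G.Adj u v) (hu : u ∈ s) : G.ReachableIn s v w → G.ReachableIn s u w
  | ⟨p, hp⟩ => ⟨.cons h p, by simpa [hu] using hp⟩

theorem ReachableIn.mono {t : Set V} (hst : s ⊆ t) : G.ReachableIn s u v → G.ReachableIn t u v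
  | ⟨p, hp⟩ => ⟨p, fun x hx => hst (hp x hx)⟩

theorem ReachableIn.reachableIn_setOf (h : G.ReachableIn s u v) :
    G.ReachableIn {x | G.ReachableIn s x v} u v := by
  classical
  obtain ⟨p, hp⟩ := h
  exact ⟨p, fun x hx =>
    ⟨p.dropUntil x hx, fun y hy => hp y (p.support_dropUntil_subset_support hx hy)⟩⟩

theorem ReachableIn.exists_adj (h : G.ReachableIn (insert w s) u w) (hu : u ∈ s) (hw : w ∉ s) :
    ∃ q ∈ s, G.Adj q w ∧ G.ReachableIn s u q := by
  obtain ⟨p, hp⟩ := h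
  induction p with
  | nil => exact absurd hu hw
  | @cons a b c hab p ih =>
    by_cases hb : b = c
    · subst hb
      exact ⟨a, hu, hab, .refl hu⟩
    · have hbs : b ∈ s := (hp b (by simp)).resolve_left hb
      obtain ⟨q, hqs, hqc, hbq⟩ := ih hbs hw fun x hx => hp x (by simp [hx])
      exact ⟨q, hqs, hqc, hbq.cons hab hu⟩

theorem IsAcyclic.eq_of_adj_of_reachableIn (hG : G.IsAcyclic) {a b : V} (ha : G.Adj w a)
    (hb : G.Adj w b) (hba : G.ReachableIn s b a) (hw : w ∉ s) : a = b := by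
  obtain ⟨p, hp⟩ := hba
  have hmem := isBridge_iff_forall_walk_mem_edges.mp
    (isAcyclic_iff_forall_adj_isBridge.mp hG ha) (.cons hb p)
  rw [Walk.edges_cons, List.mem_cons] at hmem
  rcases hmem with h | h
  · rcases Sym2.eq_iff.mp h with ⟨-, h⟩ | ⟨h, -⟩
    · exact h
    · exact absurd h (G.ne_of_adj hb)
  · exact absurd (hp w (p.fst_mem_support_of_mem_edges h)) hw

end ReachableIn

section Acyclic

variable {𝕜 : Type*} [RCLike 𝕜] {E : Type*} [NormedAddCommGroup E] [InnerProductSpace 𝕜 E]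
  {V : Type*} {G : SimpleGraph V} {z : V → E}

open Finset in
theorem IsAcyclic.linearIndepOn_of_reachableIn (hG : G.IsAcyclic) (hz : G.IsFaithfulOrthRep 𝕜 z)
    {S : Finset V} {w : V} (hw : w ∉ S) (hS : ∀ u ∈ S, G.ReachableIn (insert w ↑S) u w) :
    LinearIndepOn 𝕜 z S := by
  classical
  induction S using Finset.strongInduction generalizing w with
  | H S ih =>
  rw [linearIndepOn_finset_iff]
  intro c hc u₀ hu₀
  obtain ⟨q, hqS, hqw, hu₀q⟩ := (hS u₀ hu₀).exists_adj hu₀ hw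
  set C := S.filter (G.ReachableIn S · q)
  have hCS : C ⊆ S := filter_subset _ _
  have hqC : q ∈ C := mem_filter.mpr ⟨hqS, .refl hqS⟩
  -- no edge leaves `C` inside `S`, so the relation restricted to `C` is orthogonal to the rest
  have hC : ∑ u ∈ C, c u • z u = 0 := by
    refine eq_zero_of_add_eq_zero_of_inner_eq_zero (𝕜 := 𝕜)
      (hc ▸ sum_filter_add_sum_filter_not S _ fun u => c u • z u) ?_
    rw [sum_inner]
    refine sum_eq_zero fun u hu => ?_
    rw [inner_sum]
    refine sum_eq_zero fun v hv => ?_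
    simp only [C, mem_filter] at hu hv
    rw [inner_smul_left, inner_smul_right, hz.inner_eq_zero (fun huv : u = v => hv.2 (huv ▸ hu.2))
      fun huv => hv.2 (hu.2.cons huv.symm hv.1), mul_zero, mul_zero]
  -- by acyclicity, `q` is the only neighbour of `w` in `C`
  have hwC : ∀ u ∈ C, u ≠ q → inner 𝕜 (z w) (c u • z u) = 0 := by
    intro u hu huq
    rw [inner_smul_right, hz.inner_eq_zero (fun h : w = u => hw (h ▸ hCS hu)) fun hwu => huq
      (hG.eq_of_adj_of_reachableIn hwu hqw.symm (mem_filter.mp hu).2.symm hw), mul_zero]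
  have hcq : c q = 0 := by
    have h := congrArg (inner 𝕜 (z w)) hC
    rw [inner_sum, inner_zero_right, sum_eq_single q hwC fun h => absurd hqC h,
      inner_smul_right] at h
    exact (mul_eq_zero.mp h).resolve_right ((hz w q (G.ne_of_adj hqw.symm)).mpr hqw.symm)
  have hCq : ∀ u ∈ C.erase q, c u = 0 := by
    refine linearIndepOn_finset_iff.mp
      (ih _ ((erase_ssubset hqC).trans_subset hCS) (notMem_erase q C) ?_) c ?_
    · intro u hu
      rw [← coe_insert, insert_erase hqC]
      exact (mem_filter.mp (mem_of_mem_erase hu)).2.reachableIn_setOf.mono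
        fun x hx => mem_filter.mpr ⟨ReachableIn.mem_left hx, hx⟩
    · rwa [← add_sum_erase C _ hqC, hcq, zero_smul, zero_add] at hC
  obtain rfl | hne := eq_or_ne u₀ q
  · exact hcq
  · exact hCq u₀ (mem_erase.mpr ⟨hne, mem_filter.mpr ⟨hu₀, hu₀q⟩⟩)

theorem IsTree.linearIndepOn_compl_singleton [Fintype V] (hG : G.IsTree)
    (hz : G.IsFaithfulOrthRep 𝕜 z) (r : V) : LinearIndepOn 𝕜 z {r}ᶜ := by
  classical
  have := hG.isAcyclic.linearIndepOn_of_reachableIn hz (Finset.notMem_erase r .univ)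
    fun u _ => ⟨(hG.connected.preconnected u r).some, fun x _ => by simp⟩
  simpa [Set.compl_eq_univ_sdiff] using this

end Acyclic

section Corona

variable {𝕜 : Type} [RCLike 𝕜] {α β : Type} {G : SimpleGraph α}

theorem IsTree.le_finrank_span_of_isFaithfulOrthRep_corona {E : Type*} [NormedAddCommGroup E]
    [InnerProductSpace 𝕜 E] [FiniteDimensional 𝕜 E] [Fintype α] (hG : G.IsTree)
    {H : SimpleGraph β} (b : β) {z : α ⊕ α × β → E} (hz : (corona G H).IsFaithfulOrthRep 𝕜 z) :
    2 * Fintype.card α - 1 ≤ finrank 𝕜 (span 𝕜 (range z)) := by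
  classical
  obtain ⟨r⟩ := hG.connected.nonempty
  set x := fun u => z (.inl u)
  set y := fun u => z (.inr (u, b))
  have hx : G.IsFaithfulOrthRep 𝕜 x := fun u v huv => hz _ _ (by simpa)
  have hyy : Pairwise fun u v => inner 𝕜 (y u) (y v) = 0 := fun u v huv =>
    hz.inner_eq_zero (by simp [huv]) fun h => huv h.1
  have hxy : ∀ u v, u ≠ v → inner 𝕜 (x u) (y v) = 0 := fun u v huv =>
    hz.inner_eq_zero (by simp) huv
  have hy : ∀ u, y u ≠ 0 := fun u hu =>
    (hz (.inl u) (.inr (u, b)) (by simp)).mpr rfl (by simp [y, hu])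
  set x' := fun u => x u - (inner 𝕜 (y u) (x u) / inner 𝕜 (y u) (y u)) • y u
  set F := Sum.elim y fun u : ({r}ᶜ : Set α) => x' u
  have hF : LinearIndependent 𝕜 F :=
    (linearIndependent_of_ne_zero_of_inner_eq_zero hy hyy).sum_type
      (hG.linearIndepOn_compl_singleton (hx.sub_proj hyy hxy) r)
      (isOrtho_span.mpr <| by
        rintro _ ⟨v, rfl⟩ _ ⟨u, rfl⟩
        exact inner_sub_proj_eq_zero hyy hxy u v).disjoint
  have hFz : span 𝕜 (range F) ≤ span 𝕜 (range z) := by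
    refine span_le.mpr (range_subset_iff.mpr ?_)
    rintro (u | u)
    · exact subset_span ⟨_, rfl⟩
    · exact sub_mem (subset_span ⟨_, rfl⟩) (smul_mem _ _ (subset_span ⟨_, rfl⟩))
  have hα := Fintype.card_pos_iff.mpr ⟨r⟩
  calc 2 * Fintype.card α - 1 = Fintype.card α + Fintype.card ({r}ᶜ : Set α) := by
        rw [Fintype.card_compl_set, Set.card_singleton]; omega
    _ = finrank 𝕜 (span 𝕜 (range F)) := by rw [finrank_span_eq_card hF, Fintype.card_sum]
    _ ≤ finrank 𝕜 (span 𝕜 (range z)) := Submodule.finrank_mono hFz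

/-- The coordinates, indexed by the vertices and the edges of `G`, on which the 0/1 vector of a
vertex of `corona G ⊤` is supported. -/
def coronaCoord (G : SimpleGraph α) (β : Type) : α ⊕ α × β → α ⊕ G.edgeSet → Prop
  | .inl u, .inl w => w = u
  | .inl u, .inr e => u ∈ (e : Sym2 α)
  | .inr p, .inl w => w = p.1
  | .inr _, .inr _ => False

theorem exists_coronaCoord_and_iff_adj {v v' : α ⊕ α × β} (hvv' : v ≠ v') :
    (∃ k, coronaCoord G β v k ∧ coronaCoord G β v' k) ↔ (corona G ⊤).Adj v v' := by
  rcases v with u | ⟨u, i⟩ <;> rcases v' with u' | ⟨u', i'⟩ <;>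
    simp [coronaCoord, corona, Sum.exists] at hvv' ⊢
  case inl.inl =>
    simp only [hvv', false_or]
    refine ⟨fun ⟨e, hu, he, hu'⟩ => ?_,
      fun h => ⟨s(u, u'), Sym2.mem_mk_left _ _, h, Sym2.mem_mk_right _ _⟩⟩
    rwa [(Sym2.mem_and_mem_iff hvv').mp ⟨hu, hu'⟩] at he
  case inr.inl => exact eq_comm
  case inr.inr => exact hvv'

theorem IsTree.mrPlus_corona_top [Fintype α] [DecidableEq α] [Fintype β] [DecidableEq β]
    [Nonempty β] (hG : G.IsTree) :
    mrPlus 𝕜 (corona G (⊤ : SimpleGraph β)) = 2 * Fintype.card α - 1 := by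
  classical
  obtain ⟨b⟩ := ‹Nonempty β›
  refine mrPlus_eq_of_isFaithfulOrthRep (z₀ := fun v => indicatorVec 𝕜 {k | coronaCoord G β v k})
    (fun v v' h => (inner_indicatorVec_ne_zero_iff _ _).trans (exists_coronaCoord_and_iff_adj h))
    ?_ fun z hz => hG.le_finrank_span_of_isFaithfulOrthRep_corona b hz
  calc _ ≤ finrank 𝕜 (EuclideanSpace 𝕜 (α ⊕ G.edgeSet)) := Submodule.finrank_le _
    _ = 2 * Fintype.card α - 1 := by
      have := hG.card_edgeFinset
      rw [finrank_euclideanSpace, Fintype.card_sum, ← edgeFinset_card]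
      omega

end Corona

end SimpleGraph

theorem mrPlus_corona_tree_complete_general (m n : ℕ) (hn : 2 ≤ n)
    (T : SimpleGraph (Fin m)) (hT : T.IsTree) :
    mrPlus ℝ (corona T (⊤ : SimpleGraph (Fin n))) = 2 * m - 1 ∧
    mrPlus ℂ (corona T (⊤ : SimpleGraph (Fin n))) = 2 * m - 1 := by
  have : Nonempty (Fin n) := ⟨⟨0, by omega⟩⟩
  simpa using And.intro (hT.mrPlus_corona_top (𝕜 := ℝ) (β := Fin n))
    (hT.mrPlus_corona_top (𝕜 := ℂ) (β := Fin n))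

/-- for a tree `T` of order `m ≥ 2` and `n ≥ 2`, `mr₊(T ∘ K_n) = 2m − 1`. -/
theorem mrPlus_corona_tree_complete (m n : ℕ) (hm : 2 ≤ m) (hn : 2 ≤ n)
    (T : SimpleGraph (Fin m)) (hT : T.IsTree) :
    mrPlus ℝ (corona T (⊤ : SimpleGraph (Fin n))) = 2 * m - 1 ∧
    mrPlus ℂ (corona T (⊤ : SimpleGraph (Fin n))) = 2 * m - 1 :=
  mrPlus_corona_tree_complete_general m n hn T hT
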